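/- arXiv:1501.04523 — 2 statements merged into one kernel-verified Lean document; each statement's English description precedes it below -/
import Mathlib

section
/- Let P be a finite poset, n ≥ 1, 𝒥 a poset ideal of Hom(P,[n]), and ≤ᵗ a total order on 𝒥 extending the pointwise partial order. For φ ∈ 𝒥 let J_φ be the ideal generated by all m_{Γψ} with ψ ∈ 𝒥 and ψ <ᵗ φ. Then the ideal quotient J_φ : (m_{Γφ}) equals the ideal generated by the variables x_{(p,i)} with (p,i) ∈ Λφ. -/
open MvPolynomial

/-!
The products `m_{Γψ}` are monomials, and the colon of a monomial ideal by a monomial `x^b` is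
generated by the monomials `x^(a - b)`. For `ψ <ᵗ φ` the monomial `x^(Γψ - Γφ)` is the product of
the `x_{(p,ψ p)}` with `ψ p ≠ φ p`; one of them has `(p, ψ p) ∈ Λφ` (take `p` minimal with
`ψ p < φ p`, which exists since `φ ≰ ψ`). Conversely, lowering `φ` at `p` to `i` for
`(p,i) ∈ Λφ` gives some `ψ ∈ 𝒥` with `ψ <ᵗ φ` and `x^(Γψ - Γφ) = x_{(p,i)}`.
-/

theorem MvPolynomial.colon_span_monomial_image {σ R : Type*} [CommSemiring R]
    (A : Set (σ →₀ ℕ)) (b : σ →₀ ℕ) :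
    (Ideal.span ((fun a => monomial a (1 : R)) '' A)).colon (Ideal.span {monomial b (1 : R)})
      = Ideal.span ((fun a => monomial a (1 : R)) '' ((· - b) '' A)) := by
  ext f
  rw [Ideal.mem_colon_span_singleton, mem_ideal_span_monomial_image,
    mem_ideal_span_monomial_image]
  simp only [Set.exists_mem_image, mem_support_iff, coeff_mul_monomial', mul_one]
  constructor
  · intro h d hd
    obtain ⟨a, ha, hab⟩ := h (d + b) (by simpa using hd)
    exact ⟨a, ha, tsub_le_iff_right.2 hab⟩
  · intro h x hx
    rw [ite_ne_right_iff] at hx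
    obtain ⟨a, ha, hab⟩ := h _ hx.2
    exact ⟨a, ha, (tsub_le_iff_right.1 hab).trans (tsub_add_cancel_of_le hx.1).le⟩

section GraphExponent

variable {P α : Type*} [Fintype P]

noncomputable def graphExp (ψ : P → α) : P × α →₀ ℕ := ∑ p, Finsupp.single (p, ψ p) 1

theorem prod_X_graph_eq_monomial {R : Type*} [CommSemiring R] (ψ : P → α) :
    ∏ p, (X (p, ψ p) : MvPolynomial (P × α) R) = monomial (graphExp ψ) 1 :=
  (monomial_sum_one _ _).symm

variable [DecidableEq P] [DecidableEq α]

theorem graphExp_apply (ψ : P → α) (p : P) (i : α) :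
    graphExp ψ (p, i) = if ψ p = i then 1 else 0 := by
  simp [graphExp, Finsupp.finsetSum_apply, Finsupp.single_apply, ite_and, Finset.sum_ite_eq']

theorem graphExp_tsub_graphExp_apply_ne_zero {φ ψ : P → α} {p : P} (h : ψ p ≠ φ p) :
    (graphExp ψ - graphExp φ) (p, ψ p) ≠ 0 := by
  simp [graphExp_apply, h.symm]

theorem graphExp_update_tsub_graphExp_le (φ : P → α) (p : P) (i : α) :
    graphExp (Function.update φ p i) - graphExp φ ≤ Finsupp.single (p, i) 1 := by
  rintro ⟨q, j⟩
  by_cases hq : q = p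
  · subst hq
    simp [graphExp_apply, Finsupp.single_apply]
  · simp [graphExp_apply, hq]

end GraphExponent

section Monotone

variable {P α : Type*} [PartialOrder P]

theorem exists_lt_forall_lt_le_of_not_le [Finite P] [LinearOrder α] {φ ψ : P → α}
    (hψ : Monotone ψ) (h : ¬ φ ≤ ψ) : ∃ p, ψ p < φ p ∧ ∀ q < p, φ q ≤ ψ p := by
  obtain ⟨p, hmin⟩ := exists_minimal_of_wellFoundedLT (fun p => ψ p < φ p)
    (by simpa [Pi.le_def] using h)
  exact ⟨p, hmin.prop, fun q hq => (not_lt.1 (hmin.not_prop_of_lt hq)).trans (hψ hq.le)⟩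

theorem Monotone.update_of_forall_lt_le [DecidableEq P] [Preorder α] {φ : P → α}
    (hφ : Monotone φ) {p : P} {i : α} (hi : i ≤ φ p) (hmin : ∀ q < p, φ q ≤ i) :
    Monotone (Function.update φ p i) := by
  intro a b hab
  by_cases ha : a = p <;> by_cases hb : b = p
  · simp [ha, hb]
  · subst ha; simpa [hb] using hi.trans (hφ hab)
  · subst hb; simpa [ha] using hmin a (lt_of_le_of_ne hab ha)
  · simpa [ha, hb] using hφ hab

end Monotone

theorem coletterplace_colon_ideal_general
    (k : Type*) [Field k]
    {P : Type*} [PartialOrder P] [Fintype P]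
    (n : ℕ)
    (𝒥 : Set (P → Fin n))
    (h𝒥mono : ∀ φ ∈ 𝒥, Monotone φ)
    (h𝒥down : ∀ φ ∈ 𝒥, ∀ ψ : P → Fin n, Monotone ψ → (∀ p, ψ p ≤ φ p) → ψ ∈ 𝒥)
    (t : (P → Fin n) → (P → Fin n) → Prop)
    (htantisymm : ∀ φ ∈ 𝒥, ∀ ψ ∈ 𝒥, t φ ψ → t ψ φ → φ = ψ)
    (hext : ∀ φ ∈ 𝒥, ∀ ψ ∈ 𝒥, (∀ p, φ p ≤ ψ p) → t φ ψ)
    (φ : P → Fin n) (hφ : φ ∈ 𝒥) :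
    (Ideal.span ((fun ψ : P → Fin n => ∏ p : P, X (p, ψ p)) ''
        {ψ | ψ ∈ 𝒥 ∧ t ψ φ ∧ ψ ≠ φ})).colon
      (Ideal.span {∏ p : P, (X (p, φ p) : MvPolynomial (P × Fin n) k)})
    = Ideal.span ((fun v : P × Fin n => (X v : MvPolynomial (P × Fin n) k)) ''
        {v : P × Fin n | v.2 < φ v.1 ∧ ∀ q : P, q < v.1 → φ q ≤ v.2}) := by
  classical
  simp only [prod_X_graph_eq_monomial]
  rw [← Set.image_image (fun a => monomial a (1 : k)) graphExp,
    MvPolynomial.colon_span_monomial_image]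
  apply le_antisymm
  · rw [Ideal.span_le]
    rintro _ ⟨_, ⟨_, ⟨ψ, ⟨hψ, htψ, hne⟩, rfl⟩, rfl⟩, rfl⟩
    have hnle : ¬ φ ≤ ψ := fun hle =>
      hne (htantisymm φ hφ ψ hψ (hext φ hφ ψ hψ hle) htψ).symm
    obtain ⟨p, hlt, hmin⟩ := exists_lt_forall_lt_le_of_not_le (h𝒥mono ψ hψ) hnle
    rw [SetLike.mem_coe, mem_ideal_span_X_image]
    intro m hm
    rw [Finset.mem_singleton.1 (support_monomial_subset hm)]
    exact ⟨(p, ψ p), ⟨hlt, hmin⟩, graphExp_tsub_graphExp_apply_ne_zero hlt.ne⟩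
  · rw [Ideal.span_le]
    rintro _ ⟨⟨p, i⟩, ⟨hlt, hmin⟩, rfl⟩
    set ψ := Function.update φ p i
    have hle : ψ ≤ φ := update_le_iff.2 ⟨hlt.le, fun _ _ => le_rfl⟩
    have hψ : ψ ∈ 𝒥 := h𝒥down φ hφ ψ ((h𝒥mono φ hφ).update_of_forall_lt_le hlt.le hmin) hle
    have hne : ψ ≠ φ := fun h => hlt.ne (by simpa [ψ] using congrFun h p)
    rw [SetLike.mem_coe, mem_ideal_span_monomial_image, support_X]
    rintro _ hm
    rw [Finset.mem_singleton.1 hm]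
    exact ⟨_, ⟨_, ⟨ψ, ⟨hψ, hext ψ hψ φ hφ hle, hne⟩, rfl⟩, rfl⟩,
      graphExp_update_tsub_graphExp_le φ p i⟩

/-- For a poset ideal `𝒥` of `Hom(P,[n])`, a total order extending the pointwise order,
and `φ ∈ 𝒥`, the colon ideal `J_φ : m_{Γφ}` equals the ideal generated by the variables
`x_{(p,i)}` with `(p,i) ∈ Λφ`. -/
theorem coletterplace_colon_ideal
    (k : Type*) [Field k]
    {P : Type*} [PartialOrder P] [Fintype P]
    (n : ℕ) (hn : 1 ≤ n)
    (𝒥 : Set (P → Fin n))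
    (h𝒥mono : ∀ φ ∈ 𝒥, Monotone φ)
    (h𝒥down : ∀ φ ∈ 𝒥, ∀ ψ : P → Fin n, Monotone ψ → (∀ p, ψ p ≤ φ p) → ψ ∈ 𝒥)
    (t : (P → Fin n) → (P → Fin n) → Prop)
    (htrefl : ∀ φ ∈ 𝒥, t φ φ)
    (htantisymm : ∀ φ ∈ 𝒥, ∀ ψ ∈ 𝒥, t φ ψ → t ψ φ → φ = ψ)
    (httrans : ∀ φ ∈ 𝒥, ∀ ψ ∈ 𝒥, ∀ χ ∈ 𝒥, t φ ψ → t ψ χ → t φ χ)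
    (httotal : ∀ φ ∈ 𝒥, ∀ ψ ∈ 𝒥, t φ ψ ∨ t ψ φ)
    (hext : ∀ φ ∈ 𝒥, ∀ ψ ∈ 𝒥, (∀ p, φ p ≤ ψ p) → t φ ψ)
    (φ : P → Fin n) (hφ : φ ∈ 𝒥) :
    (Ideal.span ((fun ψ : P → Fin n => ∏ p : P, X (p, ψ p)) ''
        {ψ | ψ ∈ 𝒥 ∧ t ψ φ ∧ ψ ≠ φ})).colon
      (Ideal.span {∏ p : P, (X (p, φ p) : MvPolynomial (P × Fin n) k)})
    = Ideal.span ((fun v : P × Fin n => (X v : MvPolynomial (P × Fin n) k)) ''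
        {v : P × Fin n | v.2 < φ v.1 ∧ ∀ q : P, q < v.1 → φ q ≤ v.2}) :=
  coletterplace_colon_ideal_general k n 𝒥 h𝒥mono h𝒥down t htantisymm hext φ hφ
end

section
/- Let S = k[x₀,x₁,x₂,…,x_n], let I ⊆ S be a squarefree monomial ideal, and let J ⊆ S be its Alexander dual. Let S₁ = k[x,x₂,…,x_n] and π : S → S₁ the ring map with x₀,x₁ ↦ x and x_i ↦ x_i for i ≥ 2, and let I₁ ⊆ S₁ be the ideal generated by π(I). If I₁ is a squarefree monomial ideal, then x₁ − x₀ is a regular element (nonzerodivisor) on S/J. -/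
/-!
`J` is spanned by the monomials whose support meets the support of every monomial of `I`
(transversals), so it suffices to show that every monomial `x^m` of `f` is a transversal.
Comparing coefficients of `(x₁ - x₀) f` along the chain `m, m + e₁ - e₀, m + 2e₁ - 2e₀, …`
gives a monomial of `(x₁ - x₀) f ∈ J` supported in `supp m ∪ {1}`, and symmetrically one
supported in `supp m ∪ {0}`. Hence a monomial `x^e ∈ I` missing `supp m` is divisible by
`x₀x₁`. Its image lies in the squarefree monomial ideal `I₁`, so it is divisible by a
squarefree generator of `I₁`, which in turn is divisible by the image of a monomial
`x^e' ∈ I`. Squarefreeness forbids `x₀x₁ ∣ x^e'`, while away from `x₀, x₁` the support of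
`e'` lies in that of `e`; so `x^e'` also misses `supp m`, a contradiction.
-/

open MvPolynomial

namespace Finsupp

variable {α β M : Type*} [AddCommMonoid M] [PartialOrder M] [IsOrderedAddMonoid M]
  [CanonicallyOrderedAdd M]

lemma add_le_mapDomain_apply {g : α → β} {a b : α} (hab : a ≠ b) (h : g a = g b)
    (u : α →₀ M) : u a + u b ≤ u.mapDomain g (g a) := by
  classical
  have hle : single a (u a) + single b (u b) ≤ u := fun v => by
    simp only [coe_add, Pi.add_apply, single_apply]
    split_ifs <;> subst_vars <;> simp_all
  simpa [mapDomain_add, mapDomain_single, h] using mapDomain_mono (f := g) hle (g a)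

end Finsupp

namespace MvPolynomial

variable {σ τ R : Type*}

theorem map_rename_span_monomial_image [CommSemiring R] (g : σ → τ) (G : Set (σ →₀ ℕ)) :
    Ideal.map (rename g) (Ideal.span ((fun d => monomial d (1 : R)) '' G)) =
      Ideal.span ((fun d => monomial d (1 : R)) '' (Finsupp.mapDomain g '' G)) := by
  simp only [Ideal.map_span, Set.image_image, rename_monomial]

theorem exists_mem_support_X_sub_X_mul_subset [CommRing R] [DecidableEq σ] {i j : σ}
    (hij : i ≠ j) {f : MvPolynomial σ R} {m : σ →₀ ℕ} (hm : m ∈ f.support) :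
    ∃ u ∈ ((X i - X j) * f).support, u.support ⊆ insert i m.support := by
  classical
  -- Among the monomials of `f` obtained from `m` by trading `x_j`'s for `x_i`'s, take one
  -- with the fewest `x_j`'s; multiplied by `x_i` it cannot cancel against `x_j * f`.
  set C := f.support.filter fun m' =>
    (∀ v, v ≠ i → v ≠ j → m' v = m v) ∧ m' i + m' j = m i + m j
  obtain ⟨m', hm'C, hmin⟩ := C.exists_min_image (fun m' => m' j) ⟨m, by simp [C, hm]⟩
  simp only [C, Finset.mem_filter, mem_support_iff] at hm'C hmin
  obtain ⟨hm'f, hm'off, hm'ij⟩ := hm'C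
  have hm'm : m' j ≤ m j := hmin m ⟨mem_support_iff.mp hm, fun _ _ _ => rfl, rfl⟩
  have hu : ∀ v, (m' + Finsupp.single i 1 : σ →₀ ℕ) v = m' v + if i = v then 1 else 0 :=
    fun v => by simp [Finsupp.single_apply]
  refine ⟨m' + Finsupp.single i 1, ?_, fun v hv => ?_⟩
  · have hXj : coeff (m' + Finsupp.single i 1) (X j * f) = 0 := by
      rw [coeff_X_mul']
      split_ifs with hj
      · by_contra hne
        have hlt := hmin (m' + Finsupp.single i 1 - Finsupp.single j 1)
        simp only [Finsupp.mem_support_iff, hu, Finsupp.tsub_apply, Finsupp.single_apply,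
          if_true, if_neg hij, if_neg hij.symm, add_zero, tsub_zero] at hj hlt
        have := hlt ⟨hne, fun v hvi hvj => by simp [Ne.symm hvi, Ne.symm hvj, hm'off v hvi hvj],
          by omega⟩
        omega
      · rfl
    rw [mem_support_iff, sub_mul, coeff_sub, hXj, sub_zero, coeff_X_mul', if_pos (by simp),
      add_tsub_cancel_right]
    exact hm'f
  · rw [Finsupp.mem_support_iff, hu] at hv
    rw [Finset.mem_insert, Finsupp.mem_support_iff]
    by_cases hvi : v = i
    · exact .inl hvi
    by_cases hvj : v = j
    · subst hvj; right; simp [Ne.symm hvi] at hv; omega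
    · right; rw [← hm'off v hvi hvj]; simpa [Ne.symm hvi] using hv

end MvPolynomial

section AlexanderDual

variable {σ R : Type*} [CommSemiring R]

def IsTransversal (I : Ideal (MvPolynomial σ R)) (s : Finset σ) : Prop :=
  ∀ e : σ →₀ ℕ, monomial e (1 : R) ∈ I → ∃ v ∈ s, v ∈ e.support

noncomputable def alexanderDual (I : Ideal (MvPolynomial σ R)) : Ideal (MvPolynomial σ R) :=
  Ideal.span ((fun d => monomial d 1) '' {d | IsTransversal I d.support})

def SeparatesPair (I : Ideal (MvPolynomial σ R)) (i j : σ) : Prop :=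
  ∀ e : σ →₀ ℕ, monomial e (1 : R) ∈ I → ∃ e' : σ →₀ ℕ, monomial e' (1 : R) ∈ I ∧
    ¬(i ∈ e'.support ∧ j ∈ e'.support) ∧ ∀ v ∈ e'.support, v ≠ i → v ≠ j → v ∈ e.support

variable {I : Ideal (MvPolynomial σ R)}

lemma IsTransversal.mono {s t : Finset σ} (hst : s ⊆ t) (hs : IsTransversal I s) :
    IsTransversal I t := fun e he =>
  let ⟨v, hvs, hve⟩ := hs e he
  ⟨v, hst hvs, hve⟩

lemma IsTransversal.mem_support_of_insert [DecidableEq σ] {i : σ} {s : Finset σ}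
    (h : IsTransversal I (insert i s)) {e : σ →₀ ℕ} (he : monomial e (1 : R) ∈ I)
    (hmiss : ∀ v ∈ s, v ∉ e.support) : i ∈ e.support := by
  obtain ⟨v, hv, hve⟩ := h e he
  rcases Finset.mem_insert.mp hv with rfl | hvs
  exacts [hve, absurd hve (hmiss v hvs)]

lemma IsTransversal.of_insert_of_insert [DecidableEq σ] {i j : σ} {s : Finset σ}
    (hI : SeparatesPair I i j) (hi : IsTransversal I (insert i s))
    (hj : IsTransversal I (insert j s)) : IsTransversal I s := by
  intro e he
  by_contra! hmiss
  obtain ⟨e', he', hnot, hsub⟩ := hI e he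
  refine hnot ⟨hi.mem_support_of_insert he' fun v hvs hve' => hmiss v hvs ?_,
    hj.mem_support_of_insert he' fun v hvs hve' => hmiss v hvs ?_⟩
  all_goals
    by_cases hvi : v = i
    · exact hvi ▸ hi.mem_support_of_insert he hmiss
    by_cases hvj : v = j
    · exact hvj ▸ hj.mem_support_of_insert he hmiss
    exact hsub v hve' hvi hvj

lemma mem_alexanderDual_iff {q : MvPolynomial σ R} :
    q ∈ alexanderDual I ↔ ∀ u ∈ q.support, IsTransversal I u.support := by
  rw [alexanderDual, mem_ideal_span_monomial_image]
  exact forall₂_congr fun u _ => ⟨fun ⟨d, hd, hdu⟩ => hd.mono (Finsupp.support_mono hdu),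
    fun hu => ⟨u, hu, le_rfl⟩⟩

lemma separatesPair_of_map_rename [Nontrivial R] {τ : Type*} (g : σ → τ) {i j : σ}
    (hij : i ≠ j) (hgij : g i = g j) (hfib : ∀ v, v ≠ i → v ≠ j → ∀ w, g w = g v → w = v)
    {G : Set (σ →₀ ℕ)} {G₁ : Set (τ →₀ ℕ)} (hG₁ : ∀ d ∈ G₁, ∀ v, d v ≤ 1)
    (hmap : Ideal.map (rename g) (Ideal.span ((fun d => monomial d (1 : R)) '' G)) =
      Ideal.span ((fun d => monomial d (1 : R)) '' G₁)) :
    SeparatesPair (Ideal.span ((fun d => monomial d (1 : R)) '' G)) i j := by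
  classical
  intro e he
  have hmem : monomial (e.mapDomain g) (1 : R) ∈ Ideal.span ((fun d => monomial d 1) '' G₁) := by
    rw [← hmap, ← rename_monomial]
    exact Ideal.mem_map_of_mem _ he
  rw [mem_ideal_span_monomial_image] at hmem
  obtain ⟨d, hdG₁, hde⟩ := hmem (e.mapDomain g) (by simp [support_monomial])
  have hd : monomial d (1 : R) ∈
      Ideal.span ((fun d => monomial d 1) '' (Finsupp.mapDomain g '' G)) := by
    rw [← map_rename_span_monomial_image, hmap]
    exact Ideal.subset_span ⟨d, hdG₁, rfl⟩
  rw [mem_ideal_span_monomial_image] at hd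
  obtain ⟨-, ⟨e', he'G, rfl⟩, he'd⟩ := hd d (by simp [support_monomial])
  refine ⟨e', Ideal.subset_span ⟨e', he'G, rfl⟩, fun ⟨hi, hj⟩ => ?_, fun v hv hvi hvj => ?_⟩
  · rw [Finsupp.mem_support_iff] at hi hj
    have := (Finsupp.add_le_mapDomain_apply hij hgij e').trans (he'd (g i))
    have := hG₁ d hdG₁ (g i)
    omega
  · have hgv : g v ∈ (e.mapDomain g).support := by
      refine Finsupp.support_mono (he'd.trans hde) ?_
      rw [Finsupp.mapDomain_support_of_subsingletonAddUnits]
      exact Finset.mem_image_of_mem g hv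
    rw [Finsupp.mapDomain_support_of_subsingletonAddUnits, Finset.mem_image] at hgv
    obtain ⟨w, hw, hwv⟩ := hgv
    rwa [hfib v hvi hvj w hwv] at hw

end AlexanderDual

lemma mem_alexanderDual_of_X_sub_X_mul_mem {σ R : Type*} [CommRing R]
    {I : Ideal (MvPolynomial σ R)} {i j : σ} (hij : i ≠ j) (hI : SeparatesPair I i j) {f : MvPolynomial σ R}
    (hf : (X i - X j) * f ∈ alexanderDual I) : f ∈ alexanderDual I := by
  classical
  rw [mem_alexanderDual_iff] at hf ⊢
  intro m hm
  have hf' : ∀ u ∈ ((X j - X i) * f).support, IsTransversal I u.support := by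
    rwa [← neg_sub, neg_mul, support_neg]
  obtain ⟨u, hu, hui⟩ := exists_mem_support_X_sub_X_mul_subset hij hm
  obtain ⟨w, hw, hwj⟩ := exists_mem_support_X_sub_X_mul_subset hij.symm hm
  exact ((hf u hu).mono hui).of_insert_of_insert hI ((hf' w hw).mono hwj)

theorem variable_difference_regular_on_dual_general
    (k : Type*) [Field k] (n : ℕ)
    (I : Ideal (MvPolynomial (Fin (n + 1)) k))
    (hIsqfree : ∃ G : Set (Fin (n + 1) →₀ ℕ), (∀ d ∈ G, ∀ v, d v ≤ 1) ∧
      I = Ideal.span ((fun d => monomial d (1 : k)) '' G))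
    (J : Ideal (MvPolynomial (Fin (n + 1)) k))
    (hJ : J = Ideal.span { m : MvPolynomial (Fin (n + 1)) k |
      ∃ d : Fin (n + 1) →₀ ℕ,
        (∀ e : Fin (n + 1) →₀ ℕ, monomial e (1 : k) ∈ I →
          ∃ v, v ∈ d.support ∧ v ∈ e.support) ∧
        m = monomial d (1 : k) })
    (g : Fin (n + 1) → Fin n)
    (hg : ∀ i : Fin (n + 1), (g i : ℕ) = if (i : ℕ) ≤ 1 then 0 else (i : ℕ) - 1)
    (hI₁sqfree : ∃ G₁ : Set (Fin n →₀ ℕ), (∀ d ∈ G₁, ∀ v, d v ≤ 1) ∧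
      Ideal.map (rename g) I = Ideal.span ((fun d => monomial d (1 : k)) '' G₁)) :
    ∀ f : MvPolynomial (Fin (n + 1)) k, (X 1 - X 0) * f ∈ J → f ∈ J := by
  obtain ⟨G, -, rfl⟩ := hIsqfree
  obtain ⟨G₁, hG₁, hmap⟩ := hI₁sqfree
  have hJ : J = alexanderDual _ := hJ.trans <| congrArg Ideal.span <| Set.ext fun _ =>
    ⟨fun ⟨d, hd, h⟩ => ⟨d, hd, h.symm⟩, fun ⟨d, hd, h⟩ => ⟨d, hd, h.symm⟩⟩
  obtain ⟨m, rfl⟩ := Nat.exists_eq_succ_of_ne_zero (g 0).pos.ne'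
  have h10 : (1 : Fin (m + 2)) ≠ 0 := one_ne_zero
  have hg10 : g 1 = g 0 := Fin.ext (by simp [hg])
  have hfib : ∀ v, v ≠ 1 → v ≠ 0 → ∀ w, g w = g v → w = v := by
    intro v hv1 hv0 w hw
    simp only [Ne, Fin.ext_iff, Fin.val_one, Fin.val_zero] at hv1 hv0 hw ⊢
    rw [hg, hg] at hw
    split_ifs at hw <;> omega
  intro f hf
  rw [hJ] at hf ⊢
  exact mem_alexanderDual_of_X_sub_X_mul_mem h10
    (separatesPair_of_map_rename g h10 hg10 hfib hG₁ hmap) hf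

/-- If the image `I₁` of a squarefree monomial ideal `I` under `x₀,x₁ ↦ x` is a
squarefree monomial ideal, then `x₁ - x₀` is a regular element on `S/J` where `J` is the
Alexander dual of `I`. -/
theorem variable_difference_regular_on_dual
    (k : Type*) [Field k] (n : ℕ) (hn : 1 ≤ n)
    (I : Ideal (MvPolynomial (Fin (n + 1)) k))
    (hIsqfree : ∃ G : Set (Fin (n + 1) →₀ ℕ), (∀ d ∈ G, ∀ v, d v ≤ 1) ∧
      I = Ideal.span ((fun d => monomial d (1 : k)) '' G))
    (J : Ideal (MvPolynomial (Fin (n + 1)) k))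
    (hJ : J = Ideal.span { m : MvPolynomial (Fin (n + 1)) k |
      ∃ d : Fin (n + 1) →₀ ℕ,
        (∀ e : Fin (n + 1) →₀ ℕ, monomial e (1 : k) ∈ I →
          ∃ v, v ∈ d.support ∧ v ∈ e.support) ∧
        m = monomial d (1 : k) })
    (g : Fin (n + 1) → Fin n)
    (hg : ∀ i : Fin (n + 1), (g i : ℕ) = if (i : ℕ) ≤ 1 then 0 else (i : ℕ) - 1)
    (hI₁sqfree : ∃ G₁ : Set (Fin n →₀ ℕ), (∀ d ∈ G₁, ∀ v, d v ≤ 1) ∧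
      Ideal.map (rename g) I = Ideal.span ((fun d => monomial d (1 : k)) '' G₁)) :
    ∀ f : MvPolynomial (Fin (n + 1)) k, (X 1 - X 0) * f ∈ J → f ∈ J :=
  variable_difference_regular_on_dual_general k n I hIsqfree J hJ g hg hI₁sqfree
end
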